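/- Let g ≥ 1 and g' ≥ 1. The action of the product group Sp(2g, ℤ) × Sp(2g', ℤ) on the tensor product ℂ^{2g} ⊗_ℂ ℂ^{2g'}, where (M, N) acts as the tensor product of the ℂ-linear maps given by the complexifications of M and N, is irreducible: every ℂ-linear subspace of ℂ^{2g} ⊗_ℂ ℂ^{2g'} that is invariant under the map induced by M ⊗ N for all M ∈ Sp(2g, ℤ) and all N ∈ Sp(2g', ℤ) is either 0 or the whole space ℂ^{2g} ⊗_ℂ ℂ^{2g'}. -/

import Mathlib

/-!
For an integral vector `v`, the transvection `1 + v (Jv)ᵀ` is symplectic, so the rank-one matrix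
`v (Jv)ᵀ` lies in the `ℂ`-algebra spanned by `Sp(2g, ℤ)`; this span is an algebra because
`Sp(2g, ℤ)` is a monoid. A product of three such matrices is `((Ju)·v) ((Jv)·w) u (Jw)ᵀ`, and for
suitable integral `u, v, w` this is a nonzero multiple of any prescribed matrix unit. Hence
`Sp(2g, ℤ)` spans all complex matrices, so a subspace of `V ⊗ W` stable under every `M ⊗ N` is
stable under every `f ⊗ g`. Applying `(e_i^* ⊗ x) ⊗ (e_k^* ⊗ y)` to a vector with nonzero
`(i, k)`-coordinate shows that such a subspace, if nonzero, contains every `x ⊗ y`.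
-/

open Matrix TensorProduct

section Transvection

variable {m : Type*} [Fintype m] {J : Matrix m m ℤ}

theorem dotProduct_mulVec_self_eq_zero (hJ : Jᵀ = -J) (v : m → ℤ) : v ⬝ᵥ J *ᵥ v = 0 := by
  have h := dotProduct_mulVec v J v
  rw [← mulVec_transpose, hJ, neg_mulVec, neg_dotProduct, dotProduct_comm (J *ᵥ v)] at h
  omega

theorem transvection_transpose_mul_mul [DecidableEq m] (hJ : Jᵀ = -J) (v : m → ℤ) :
    (1 + vecMulVec v (J *ᵥ v))ᵀ * J * (1 + vecMulVec v (J *ᵥ v)) = J := by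
  set w := J *ᵥ v
  have h1 : vecMulVec w v * J = -vecMulVec w w := by
    rw [vecMulVec_mul, ← mulVec_transpose, hJ, neg_mulVec, vecMulVec_neg]
  have h2 : J * vecMulVec v w = vecMulVec w w := mul_vecMulVec J v w
  have h3 : vecMulVec w w * vecMulVec v w = 0 := by
    rw [vecMulVec_mul_vecMulVec, dotProduct_comm, dotProduct_mulVec_self_eq_zero hJ, zero_smul,
      vecMulVec_zero]
  rw [transpose_add, transpose_one, transpose_vecMulVec]
  simp only [add_mul, mul_add, one_mul, mul_one, h1, h2, neg_mul, h3, neg_zero]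
  abel

variable [DecidableEq m]

theorem mulVec_mulVec_self (hJ2 : J * J = -1) (x : m → ℤ) : J *ᵥ J *ᵥ x = -x := by
  rw [mulVec_mulVec, hJ2, neg_mulVec, one_mulVec]

theorem mulVec_dotProduct_mulVec (hJ : Jᵀ = -J) (hJ2 : J * J = -1) (x y : m → ℤ) :
    J *ᵥ x ⬝ᵥ J *ᵥ y = x ⬝ᵥ y := by
  rw [dotProduct_mulVec, ← mulVec_transpose, hJ, neg_mulVec, mulVec_mulVec_self hJ2, neg_neg]

theorem exists_vecMulVec_mul_mul_eq_smul_single (hJ : Jᵀ = -J) (hJ2 : J * J = -1) (a b : m) :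
    ∃ u v w : m → ℤ, ∃ c : ℤ, c ≠ 0 ∧
      vecMulVec u (J *ᵥ u) * vecMulVec v (J *ᵥ v) * vecMulVec w (J *ᵥ w) = c • single a b 1 := by
  -- `u = e_a` and `J w = e_b`; the shift `(1 - t) • J e_a` makes `(J u) ⬝ᵥ v = 1`, and then
  -- `(J v) ⬝ᵥ w = -(v b) = t (t - 1) - 1` is odd
  set t := J b a
  set v := Pi.single b 1 + (1 - t) • J *ᵥ Pi.single a 1
  have hu : J *ᵥ Pi.single a 1 ⬝ᵥ v = 1 := by
    rw [dotProduct_add, dotProduct_smul, mulVec_dotProduct_mulVec hJ hJ2]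
    simp [t]
  have hvb : v b = 1 + (1 - t) * t := by simp [v, t]
  have hw : J *ᵥ v ⬝ᵥ -(J *ᵥ Pi.single b 1) = t * (t - 1) - 1 := by
    rw [dotProduct_neg, mulVec_dotProduct_mulVec hJ hJ2, dotProduct_single, mul_one, hvb]
    ring
  refine ⟨Pi.single a 1, v, -(J *ᵥ Pi.single b 1), t * (t - 1) - 1, ?_, ?_⟩
  · intro h0
    have h := Int.even_mul_pred_self t
    rw [show t * (t - 1) = 1 by linear_combination h0] at h
    exact Int.not_even_one h
  · rw [vecMulVec_mul_vecMulVec, vecMulVec_mul_vecMulVec, hu, one_smul, hw,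
      mulVec_neg, mulVec_mulVec_self hJ2, neg_neg, vecMulVec_smul,
      ← single_eq_single_vecMulVec_single]

end Transvection

section SymplecticSpan

variable {l : Type*} [Fintype l] [DecidableEq l] (K : Type*) [Field K] [CharZero K]

theorem span_map_symplecticGroup_eq_top :
    Submodule.span K ((Int.castRingHom K).mapMatrix ''
      (symplecticGroup l ℤ : Set (Matrix (l ⊕ l) (l ⊕ l) ℤ))) = ⊤ := by
  set S := (symplecticGroup l ℤ).map (Int.castRingHom K).mapMatrix
  set A := Algebra.adjoin K (S : Set (Matrix (l ⊕ l) (l ⊕ l) K))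
  have span_eq :
      Submodule.span K (S : Set (Matrix (l ⊕ l) (l ⊕ l) K)) = Subalgebra.toSubmodule A := by
    rw [Algebra.adjoin_eq_span, Submonoid.closure_eq]
  rw [← Submonoid.coe_map]
  have vecMulVec_mem (v : l ⊕ l → ℤ) :
      (Int.castRingHom K).mapMatrix (vecMulVec v (J l ℤ *ᵥ v)) ∈ A := by
    have hT : 1 + vecMulVec v (J l ℤ *ᵥ v) ∈ symplecticGroup l ℤ :=
      SymplecticGroup.mem_iff'.2 (transvection_transpose_mul_mul (J_transpose l ℤ) v)
    have := A.sub_mem (Algebra.subset_adjoin ⟨_, hT, rfl⟩) A.one_mem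
    simpa [Matrix.map_add] using this
  have single_mem (a b : l ⊕ l) : single a b (1 : K) ∈ A := by
    obtain ⟨u, v, w, c, hc, h⟩ :=
      exists_vecMulVec_mul_mul_eq_smul_single (J_transpose l ℤ) (J_squared l ℤ) a b
    have := A.smul_mem (mul_mem (mul_mem (vecMulVec_mem u) (vecMulVec_mem v)) (vecMulVec_mem w))
      (c : K)⁻¹
    rwa [← map_mul, ← map_mul, h, map_zsmul, RingHom.mapMatrix_apply, map_single, map_one,
      ← Int.cast_smul_eq_zsmul K, inv_smul_smul₀ (Int.cast_ne_zero.2 hc)] at this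
  rw [span_eq, Algebra.toSubmodule_eq_top, eq_top_iff]
  rintro M -
  induction M using Matrix.induction_on' with
  | h_zero => exact A.zero_mem
  | h_add M N hM hN => exact A.add_mem hM hN
  | h_std_basis i j x => simpa using A.smul_mem (single_mem i j) x

theorem span_mulVecLin_map_symplecticGroup_eq_top :
    Submodule.span K
      ((fun A : Matrix (l ⊕ l) (l ⊕ l) ℤ => (A.map (Int.cast : ℤ → K)).mulVecLin) ''
        (symplecticGroup l ℤ : Set (Matrix (l ⊕ l) (l ⊕ l) ℤ))) = ⊤ := by
  have h := congrArg
    (Submodule.map (Matrix.toLin' : Matrix (l ⊕ l) (l ⊕ l) K ≃ₗ[K] _).toLinearMap)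
    (span_map_symplecticGroup_eq_top (l := l) K)
  rw [Submodule.map_span, Set.image_image, Submodule.map_top, LinearEquiv.range] at h
  exact h

end SymplecticSpan

section TensorProduct

variable {R V W : Type*} [CommSemiring R] [AddCommMonoid V] [Module R V] [AddCommMonoid W]
  [Module R W]

theorem Submodule.forall_map_mem_of_span_eq_top {P : Set (Module.End R V)}
    {Q : Set (Module.End R W)} (hP : span R P = ⊤) (hQ : span R Q = ⊤)
    {U : Submodule R (V ⊗[R] W)} (hU : ∀ f ∈ P, ∀ g ∈ Q, ∀ x ∈ U, TensorProduct.map f g x ∈ U)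
    (f : Module.End R V) (g : Module.End R W) : ∀ x ∈ U, TensorProduct.map f g x ∈ U := by
  have h : map₂ (TensorProduct.mapBilinear (RingHom.id R) V W V W) (span R P) (span R Q)
      ≤ compatibleMaps U U := by
    rw [map₂_span_span, span_le]
    rintro _ ⟨f, hf, g, hg, rfl⟩
    exact fun x hx => hU f hf g hg x hx
  rw [hP, hQ] at h
  exact h (apply_mem_map₂ _ mem_top mem_top)

theorem Module.Basis.map_smulRight_coord_apply {ι κ : Type*} (b : Basis ι R V) (c : Basis κ R W)
    (i : ι) (k : κ) (v : V) (w : W) (x : V ⊗[R] W) :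
    map ((b.coord i).smulRight v) ((c.coord k).smulRight w) x
      = (b.tensorProduct c).repr x (i, k) • v ⊗ₜ w := by
  induction x using TensorProduct.induction_on with
  | zero => simp
  | tmul x y => simp [smul_tmul, tmul_smul, smul_smul, mul_comm]
  | add x y hx hy => simp [hx, hy, add_smul]

end TensorProduct

theorem Submodule.eq_bot_or_eq_top_of_forall_map_mem {K V W : Type*} [Field K] [AddCommGroup V]
    [Module K V] [AddCommGroup W] [Module K W] {U : Submodule K (V ⊗[K] W)}
    (hU : ∀ (f : Module.End K V) (g : Module.End K W), ∀ x ∈ U, TensorProduct.map f g x ∈ U) :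
    U = ⊥ ∨ U = ⊤ := by
  refine or_iff_not_imp_left.2 fun hne => ?_
  obtain ⟨x, hxU, hx0⟩ := U.exists_mem_ne_zero_of_ne_bot hne
  set b := Module.Free.chooseBasis K V
  set c := Module.Free.chooseBasis K W
  obtain ⟨⟨i, k⟩, hik⟩ : ∃ p, (b.tensorProduct c).repr x p ≠ 0 := by
    by_contra! h
    exact hx0 ((b.tensorProduct c).repr.map_eq_zero_iff.1 (Finsupp.ext h))
  rw [eq_top_iff, ← span_tmul_eq_top, span_le]
  rintro _ ⟨v, w, rfl⟩
  have h := U.smul_mem ((b.tensorProduct c).repr x (i, k))⁻¹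
    (hU ((b.coord i).smulRight v) ((c.coord k).smulRight w) x hxU)
  rwa [b.map_smulRight_coord_apply c i k v w, inv_smul_smul₀ hik] at h

theorem transpose_mul_fromBlocks_mul_of_mem_symplecticGroup {l R : Type*} [Fintype l]
    [DecidableEq l] [CommRing R] {M : Matrix (l ⊕ l) (l ⊕ l) R} (hM : M ∈ symplecticGroup l R) :
    Mᵀ * fromBlocks 0 1 (-1) 0 * M = fromBlocks 0 1 (-1) 0 := by
  have hJ : (fromBlocks 0 1 (-1) 0 : Matrix (l ⊕ l) (l ⊕ l) R) = -J l R := by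
    simp [J, fromBlocks_neg]
  rw [hJ, Matrix.mul_neg, Matrix.neg_mul, SymplecticGroup.mem_iff'.1 hM]

theorem symplectic_tensor_monodromy_irreducible_general (g g' : ℕ)
    (U : Submodule ℂ (TensorProduct ℂ ((Fin g ⊕ Fin g) → ℂ) ((Fin g' ⊕ Fin g') → ℂ)))
    (hU : ∀ (M : Matrix (Fin g ⊕ Fin g) (Fin g ⊕ Fin g) ℤ)
        (N : Matrix (Fin g' ⊕ Fin g') (Fin g' ⊕ Fin g') ℤ),
      Mᵀ * Matrix.fromBlocks 0 1 (-1) 0 * M = Matrix.fromBlocks 0 1 (-1) 0 →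
      Nᵀ * Matrix.fromBlocks 0 1 (-1) 0 * N = Matrix.fromBlocks 0 1 (-1) 0 →
      ∀ x ∈ U,
        TensorProduct.map ((M.map (Int.cast : ℤ → ℂ)).mulVecLin)
          ((N.map (Int.cast : ℤ → ℂ)).mulVecLin) x ∈ U) :
    U = ⊥ ∨ U = ⊤ := by
  refine Submodule.eq_bot_or_eq_top_of_forall_map_mem
    (Submodule.forall_map_mem_of_span_eq_top (span_mulVecLin_map_symplecticGroup_eq_top ℂ)
      (span_mulVecLin_map_symplecticGroup_eq_top ℂ) ?_)
  rintro _ ⟨M, hM, rfl⟩ _ ⟨N, hN, rfl⟩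
  exact hU M N (transpose_mul_fromBlocks_mul_of_mem_symplecticGroup hM)
    (transpose_mul_fromBlocks_mul_of_mem_symplecticGroup hN)

/-- For `g ≥ 1` and `g' ≥ 1`, the action of `Sp(2g, ℤ) × Sp(2g', ℤ)` on
`ℂ^{2g} ⊗_ℂ ℂ^{2g'}`, where `(M, N)` acts as the tensor product of the `ℂ`-linear
maps given by the complexifications of `M` and `N`, is irreducible: every
`ℂ`-subspace invariant under `M ⊗ N` for all integral symplectic `M`, `N`
(i.e. `Mᵀ * J * M = J` with `J = [[0, I], [-I, 0]]`, and similarly for `N`)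
is `0` or the whole space. -/
theorem symplectic_tensor_monodromy_irreducible (g g' : ℕ) (hg : 1 ≤ g) (hg' : 1 ≤ g')
    (U : Submodule ℂ (TensorProduct ℂ ((Fin g ⊕ Fin g) → ℂ) ((Fin g' ⊕ Fin g') → ℂ)))
    (hU : ∀ (M : Matrix (Fin g ⊕ Fin g) (Fin g ⊕ Fin g) ℤ)
        (N : Matrix (Fin g' ⊕ Fin g') (Fin g' ⊕ Fin g') ℤ),
      Mᵀ * Matrix.fromBlocks 0 1 (-1) 0 * M = Matrix.fromBlocks 0 1 (-1) 0 →
      Nᵀ * Matrix.fromBlocks 0 1 (-1) 0 * N = Matrix.fromBlocks 0 1 (-1) 0 →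
      ∀ x ∈ U,
        TensorProduct.map ((M.map (Int.cast : ℤ → ℂ)).mulVecLin)
          ((N.map (Int.cast : ℤ → ℂ)).mulVecLin) x ∈ U) :
    U = ⊥ ∨ U = ⊤ :=
  symplectic_tensor_monodromy_irreducible_general g g' U hU
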